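/- arXiv:1602.08896 — 5 statements merged into one kernel-verified Lean document; each statement's English description precedes it below -/
import Mathlib

section
/- Let λ, μ ∈ ℂ with λ ≠ μ and let ω > 0. The function ψ(x) = exp(−(ω/2)·((λ+μ)/(λ−μ))·x²) belongs to L²(ℝ) if and only if |μ| < |λ|. -/
/-! `|ψ(x)|² = exp(-ω Re(c) x²)` with `c = (λ+μ)/(λ-μ)`, which is integrable iff `Re c > 0`; and
`Re c = (|λ|² - |μ|²) / |λ-μ|²`. -/

open MeasureTheory Complex

theorem Complex.memLp_two_cexp_neg_mul_sq_iff (b : ℂ) :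
    MemLp (fun x : ℝ => cexp (-b * (x : ℂ) ^ 2)) 2 volume ↔ 0 < b.re := by
  have hmeas : AEStronglyMeasurable (fun x : ℝ => cexp (-b * (x : ℂ) ^ 2)) volume := by
    fun_prop
  have hnorm_sq : (fun x : ℝ => ‖cexp (-b * (x : ℂ) ^ 2)‖ ^ 2)
      = fun x : ℝ => Real.exp (-(2 * b.re) * x ^ 2) := by
    ext x
    rw [norm_cexp_neg_mul_sq, ← Real.exp_nat_mul]
    ring_nf
  rw [memLp_two_iff_integrable_sq_norm hmeas, hnorm_sq, integrable_exp_neg_mul_sq_iff]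
  exact mul_pos_iff_of_pos_left two_pos

theorem Complex.re_add_div_sub (lam mu : ℂ) :
    ((lam + mu) / (lam - mu)).re = (normSq lam - normSq mu) / normSq (lam - mu) := by
  rw [div_re, normSq_apply, normSq_apply, normSq_apply]
  simp only [add_re, add_im, sub_re, sub_im]
  ring

theorem Complex.re_add_div_sub_pos_iff (lam mu : ℂ) :
    0 < ((lam + mu) / (lam - mu)).re ↔ ‖mu‖ < ‖lam‖ := by
  rcases eq_or_ne lam mu with rfl | hlm
  · -- the quotient is `0` by the convention `x / 0 = 0`, and both sides are false
    simp
  have hden : 0 < normSq (lam - mu) := normSq_pos.mpr (sub_ne_zero.mpr hlm)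
  rw [re_add_div_sub, div_pos_iff_of_pos_right hden, sub_pos,
    ← Complex.sq_norm, ← Complex.sq_norm,
    pow_lt_pow_iff_left₀ (norm_nonneg _) (norm_nonneg _) two_ne_zero]

theorem squeezed_gaussian_memL2_iff_general (lam mu : ℂ) (ω : ℝ) (hω : 0 < ω) :
    MeasureTheory.MemLp
      (fun x : ℝ => Complex.exp (-((ω : ℂ) / 2) * ((lam + mu) / (lam - mu)) * (x : ℂ) ^ 2))
      2 MeasureTheory.volume
    ↔ ‖mu‖ < ‖lam‖ := by
  have hexponent (x : ℝ) : -((ω : ℂ) / 2) * ((lam + mu) / (lam - mu)) * (x : ℂ) ^ 2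
      = -(((ω / 2 : ℝ) : ℂ) * ((lam + mu) / (lam - mu))) * (x : ℂ) ^ 2 := by
    push_cast; ring
  simp_rw [hexponent, memLp_two_cexp_neg_mul_sq_iff, re_ofReal_mul,
    mul_pos_iff_of_pos_left (half_pos hω), re_add_div_sub_pos_iff]

/-- For `λ ≠ μ` and `ω > 0`, the Gaussian
`ψ(x) = exp(−(ω/2)·((λ+μ)/(λ−μ))·x²)` is in `L²(ℝ)` iff `|μ| < |λ|`. -/
theorem squeezed_gaussian_memL2_iff (lam mu : ℂ) (hlm : lam ≠ mu) (ω : ℝ) (hω : 0 < ω) :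
    MeasureTheory.MemLp
      (fun x : ℝ => Complex.exp (-((ω : ℂ) / 2) * ((lam + mu) / (lam - mu)) * (x : ℂ) ^ 2))
      2 MeasureTheory.volume
    ↔ ‖mu‖ < ‖lam‖ :=
  squeezed_gaussian_memL2_iff_general lam mu ω hω
end

section
/- Let N ≥ 1 and let P be a 2N×2N complex matrix. Let S be the 2N×2N block-diagonal matrix with blocks (1, −1), and let K be the block matrix [[0,1],[1,0]]. Assume: (i) P*S = SP; (ii) SP is positive semidefinite, i.e. ⟨ζ, SPζ⟩ ≥ 0 for all ζ ∈ ℂ^{2N}; (iii) P + K·P̄·K = 1, where P̄ is the entrywise complex conjugate of P. Then the matrix S(P − ½·1) is positive definite: ⟨ζ, S(P − ½)ζ⟩ > 0 for all nonzero ζ ∈ ℂ^{2N}. -/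
/-!
Write `Q = S P ≥ 0`. Since `Q` is Hermitian, `Qᵀ = Q̄ = S P̄`, and the self-duality condition
`K P̄ K = 1 - P` together with `K S = -S K` turns this into `K Qᵀ K = Q - S`. Hence
`S (P - ½) = ½ (Q + K Qᵀ K)` is half the sum of two positive semidefinite matrices whose
difference `S` is invertible: a vector on which the form of the sum vanishes is killed by both
summands, hence by `S`, so it is zero.
-/

open Matrix
open scoped ComplexOrder

/-- Entrywise complex conjugate of a matrix. -/
def matConj {m n : Type*} (M : Matrix m n ℂ) : Matrix m n ℂ := M.map (starRingEnd ℂ)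

namespace Matrix

theorem PosSemidef.posDef_add_of_isUnit_sub {n 𝕜 : Type*} [Fintype n] [DecidableEq n]
    [RCLike 𝕜] {A B : Matrix n n 𝕜} (hA : A.PosSemidef) (hB : B.PosSemidef)
    (hAB : IsUnit (A - B)) : (A + B).PosDef := by
  refine .of_dotProduct_mulVec_pos (hA.add hB).isHermitian fun x hx => ?_
  refine ((hA.add hB).dotProduct_mulVec_nonneg x).lt_of_ne' fun hzero => hx ?_
  rw [add_mulVec, dotProduct_add] at hzero
  obtain ⟨hAx, hBx⟩ := (add_eq_zero_iff_of_nonneg (hA.dotProduct_mulVec_nonneg x)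
    (hB.dotProduct_mulVec_nonneg x)).mp hzero
  apply mulVec_injective_of_isUnit hAB
  rw [sub_mulVec, (hA.dotProduct_mulVec_zero_iff x).mp hAx,
    (hB.dotProduct_mulVec_zero_iff x).mp hBx, sub_zero, mulVec_zero]

section Blocks

variable {m R : Type*} [DecidableEq m] [Ring R]

theorem fromBlocks_one_neg_one_mul_self [Fintype m] :
    (fromBlocks 1 0 0 (-1) : Matrix (m ⊕ m) (m ⊕ m) R) * fromBlocks 1 0 0 (-1) = 1 := by
  simp [fromBlocks_multiply, ← fromBlocks_one]

theorem fromBlocks_swap_mul_fromBlocks_one_neg_one [Fintype m] :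
    (fromBlocks 0 1 1 0 : Matrix (m ⊕ m) (m ⊕ m) R) * fromBlocks 1 0 0 (-1) =
      -(fromBlocks 1 0 0 (-1) * fromBlocks 0 1 1 0) := by
  simp [fromBlocks_multiply, fromBlocks_neg]

theorem conjTranspose_fromBlocks_swap [StarRing R] :
    (fromBlocks 0 1 1 0 : Matrix (m ⊕ m) (m ⊕ m) R)ᴴ = fromBlocks 0 1 1 0 := by
  simp [fromBlocks_conjTranspose]

end Blocks

end Matrix

theorem matConj_mul {l m n : Type*} [Fintype m] (A : Matrix l m ℂ) (B : Matrix m n ℂ) :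
    matConj (A * B) = matConj A * matConj B :=
  Matrix.map_mul

theorem matConj_fromBlocks_one_neg_one {m : Type*} [DecidableEq m] :
    matConj (fromBlocks 1 0 0 (-1) : Matrix (m ⊕ m) (m ⊕ m) ℂ) = fromBlocks 1 0 0 (-1) := by
  simp [matConj, fromBlocks_map, Matrix.map_neg]

theorem Matrix.IsHermitian.transpose_eq_matConj {n : Type*} {Q : Matrix n n ℂ}
    (hQ : Q.IsHermitian) : Qᵀ = matConj Q := by
  nth_rw 1 [← hQ.eq]
  rfl

theorem swap_mul_transpose_mul_swap_eq_sub {m : Type*} [Fintype m] [DecidableEq m]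
    {P S K : Matrix (m ⊕ m) (m ⊕ m) ℂ} (hS : S = fromBlocks 1 0 0 (-1))
    (hK : K = fromBlocks 0 1 1 0) (hSP : (S * P).IsHermitian) (hP : P + K * matConj P * K = 1) :
    K * (S * P)ᵀ * K = S * P - S := by
  have hT : (S * P)ᵀ = S * matConj P := by
    rw [hSP.transpose_eq_matConj, matConj_mul, hS, matConj_fromBlocks_one_neg_one]
  have hKS : K * S = -(S * K) := hS ▸ hK ▸ fromBlocks_swap_mul_fromBlocks_one_neg_one
  calc K * (S * P)ᵀ * K = (K * S) * (matConj P * K) := by simp only [hT, mul_assoc]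
    _ = -(S * (K * matConj P * K)) := by simp only [hKS, neg_mul, mul_assoc]
    _ = S * P - S := by rw [eq_sub_of_add_eq' hP, mul_sub, mul_one, neg_sub]

theorem quasifree_SP_posdef_general (N : ℕ)
    (P : Matrix (Fin N ⊕ Fin N) (Fin N ⊕ Fin N) ℂ)
    (S : Matrix (Fin N ⊕ Fin N) (Fin N ⊕ Fin N) ℂ)
    (hS : S = Matrix.fromBlocks 1 0 0 (-1))
    (K : Matrix (Fin N ⊕ Fin N) (Fin N ⊕ Fin N) ℂ)
    (hK : K = Matrix.fromBlocks 0 1 1 0)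
    (h2 : (S * P).PosSemidef)
    (h3 : P + K * matConj P * K = 1) :
    (S * (P - (1 / 2 : ℂ) • 1)).PosDef := by
  have key := swap_mul_transpose_mul_swap_eq_sub hS hK h2.isHermitian h3
  have hsplit : S * (P - (1 / 2 : ℂ) • 1) = (1 / 2 : ℂ) • (S * P + K * (S * P)ᵀ * K) := by
    rw [key, mul_sub, Matrix.mul_smul, mul_one]
    module
  rw [hsplit]
  refine (h2.posDef_add_of_isUnit_sub ?_ ?_).smul (by norm_num)
  · simpa only [hK, conjTranspose_fromBlocks_swap] using
      h2.transpose.conjTranspose_mul_mul_same K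
  · rw [key, sub_sub_cancel, hS]
    exact .of_mul_eq_one _ fromBlocks_one_neg_one_mul_self

/-- If `P* S = SP`, `SP ≥ 0` and `P + K P̄ K = 1`, then
`S(P − ½·1)` is positive definite. -/
theorem quasifree_SP_posdef (N : ℕ) (hN : 1 ≤ N)
    (P : Matrix (Fin N ⊕ Fin N) (Fin N ⊕ Fin N) ℂ)
    (S : Matrix (Fin N ⊕ Fin N) (Fin N ⊕ Fin N) ℂ)
    (hS : S = Matrix.fromBlocks 1 0 0 (-1))
    (K : Matrix (Fin N ⊕ Fin N) (Fin N ⊕ Fin N) ℂ)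
    (hK : K = Matrix.fromBlocks 0 1 1 0)
    (h1 : Pᴴ * S = S * P)
    (h2 : (S * P).PosSemidef)
    (h3 : P + K * matConj P * K = 1) :
    (S * (P - (1 / 2 : ℂ) • 1)).PosDef :=
  quasifree_SP_posdef_general N P S hS K hK h2 h3
end

section
/- Let ω > 0 and z ∈ ℂ with |z| < 1. Let ψ₀(x) = c₀·exp(−ωx²/2) and ψ_z(x) = c_z·exp(−(ω/2)·((1+z)/(1−z))·x²) be the L²(ℝ)-normalized Gaussians (c₀, c_z > 0 chosen so that ‖ψ₀‖ = ‖ψ_z‖ = 1). Then |⟨ψ₀, ψ_z⟩|² = √(1 − |z|²). In particular, for |z| = tanh r with tanh r = 1/√2 the fidelity is 1/√2. -/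
/-!
Everything is a Gaussian integral. For `Re a > 0`, normalizing `c · exp(-a x²)` forces
`c² = √(2 Re a / π)`, and the overlap of two such states is `c₀ c √(π / (ā + b))`, so the
fidelity is `2 √(Re a · Re b) / |ā + b|`. For the ground state `a = ω/2` and the squeezed state
`b = (ω/2)(1 + z)/(1 - z)` one has `Re b = (ω/2)(1 - |z|²)/|1 - z|²` and `ā + b = ω/(1 - z)`,
and the factors `|1 - z|` cancel.
-/

open MeasureTheory Real Complex ComplexConjugate

lemma sq_norm_cexp_neg_mul_sq (a : ℂ) (x : ℝ) :
    ‖cexp (-a * x ^ 2)‖ ^ 2 = rexp (-(2 * a.re) * x ^ 2) := by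
  rw [Complex.norm_exp, ← Real.exp_nat_mul, ← Complex.ofReal_pow, Complex.re_mul_ofReal]
  simp only [Complex.neg_re]
  push_cast
  congr 1
  ring

lemma integral_sq_norm_ofReal_mul_cexp_neg_mul_sq (a : ℂ) (c : ℝ) :
    ∫ x : ℝ, ‖(c : ℂ) * cexp (-a * x ^ 2)‖ ^ 2 = c ^ 2 * √(π / (2 * a.re)) := by
  simp_rw [norm_mul, mul_pow, sq_norm_cexp_neg_mul_sq, Complex.norm_real, Real.norm_eq_abs, sq_abs]
  rw [integral_const_mul, integral_gaussian]

lemma sq_eq_sqrt_of_integral_sq_norm_eq_one {a : ℂ} {c : ℝ}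
    (h : ∫ x : ℝ, ‖(c : ℂ) * cexp (-a * x ^ 2)‖ ^ 2 = 1) :
    c ^ 2 = √(2 * a.re / π) := by
  rw [integral_sq_norm_ofReal_mul_cexp_neg_mul_sq] at h
  rw [eq_inv_of_mul_eq_one_left h, ← Real.sqrt_inv, inv_div]

lemma integral_conj_gaussian_mul_gaussian {a b : ℂ} (h : 0 < a.re + b.re) (c₀ c : ℝ) :
    ∫ x : ℝ, conj ((c₀ : ℂ) * cexp (-a * x ^ 2)) * ((c : ℂ) * cexp (-b * x ^ 2)) =
      (c₀ * c : ℝ) * (π / (conj a + b)) ^ (1 / 2 : ℂ) := by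
  have hre : 0 < (conj a + b).re := by simpa using h
  have hprod : ∀ x : ℝ, conj ((c₀ : ℂ) * cexp (-a * x ^ 2)) * ((c : ℂ) * cexp (-b * x ^ 2)) =
      (c₀ * c : ℝ) * cexp (-(conj a + b) * x ^ 2) := by
    intro x
    rw [map_mul, Complex.conj_ofReal, ← Complex.exp_conj, mul_mul_mul_comm, ← Complex.exp_add]
    push_cast
    congr 2
    simp only [neg_mul, map_neg, map_mul, map_pow, conj_ofReal, neg_add_rev]
    ring
  simp_rw [hprod]
  rw [integral_const_mul, integral_gaussian_complex hre]

lemma sq_norm_cpow_one_half (w : ℂ) : ‖w ^ (1 / 2 : ℂ)‖ ^ 2 = ‖w‖ := by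
  have : (1 / 2 : ℂ) = ((1 / 2 : ℝ) : ℂ) := by push_cast; rfl
  rw [this, Complex.norm_cpow_real, ← Real.sqrt_eq_rpow, Real.sq_sqrt (norm_nonneg w)]

lemma sq_norm_integral_conj_gaussian_mul_gaussian {a b : ℂ} (ha : 0 < a.re) (hb : 0 < b.re)
    {c₀ c : ℝ}
    (hn₀ : ∫ x : ℝ, ‖(c₀ : ℂ) * cexp (-a * x ^ 2)‖ ^ 2 = 1)
    (hn : ∫ x : ℝ, ‖(c : ℂ) * cexp (-b * x ^ 2)‖ ^ 2 = 1) :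
    ‖∫ x : ℝ, conj ((c₀ : ℂ) * cexp (-a * x ^ 2)) * ((c : ℂ) * cexp (-b * x ^ 2))‖ ^ 2 =
      2 * √(a.re * b.re) / ‖conj a + b‖ := by
  rw [integral_conj_gaussian_mul_gaussian (by linarith), norm_mul, mul_pow, sq_norm_cpow_one_half,
    Complex.norm_real, Real.norm_eq_abs, sq_abs, mul_pow,
    sq_eq_sqrt_of_integral_sq_norm_eq_one hn₀, sq_eq_sqrt_of_integral_sq_norm_eq_one hn,
    ← Real.sqrt_mul (by positivity), norm_div, Complex.norm_real, Real.norm_of_nonneg pi_pos.le]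
  have : √(2 * a.re / π * (2 * b.re / π)) = 2 * √(a.re * b.re) / π := by
    rw [show 2 * a.re / π * (2 * b.re / π) = (a.re * b.re) * (2 / π) ^ 2 by ring,
      Real.sqrt_mul (by positivity), Real.sqrt_sq (by positivity)]
    ring
  rw [this]
  field_simp

lemma re_one_add_div_one_sub (z : ℂ) :
    ((1 + z) / (1 - z)).re = (1 - ‖z‖ ^ 2) / ‖1 - z‖ ^ 2 := by
  rw [Complex.div_re, Complex.sq_norm, Complex.sq_norm, Complex.normSq_apply, Complex.normSq_apply]
  simp only [add_re, one_re, sub_re, sub_im, one_im, zero_sub, mul_neg, neg_mul, neg_neg, add_im,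
    zero_add]
  ring

lemma one_add_div_one_sub {z : ℂ} (hz : z ≠ 1) : 1 + (1 + z) / (1 - z) = 2 / (1 - z) := by
  have : 1 - z ≠ 0 := sub_ne_zero.mpr hz.symm
  field_simp
  ring

lemma re_one_add_div_one_sub_pos {z : ℂ} (hz : ‖z‖ < 1) : 0 < ((1 + z) / (1 - z)).re := by
  have hz1 : 1 - z ≠ 0 := sub_ne_zero.mpr (by rintro rfl; simp at hz)
  rw [re_one_add_div_one_sub]
  have : ‖z‖ ^ 2 < 1 := by nlinarith [norm_nonneg z]
  exact div_pos (by linarith) (by positivity)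

lemma gaussian_fidelity_ground_squeezed {ω : ℝ} (hω : 0 < ω) {z : ℂ} (hz : ‖z‖ < 1) :
    2 * √(((ω : ℂ) / 2).re * ((ω : ℂ) / 2 * ((1 + z) / (1 - z))).re) /
      ‖conj ((ω : ℂ) / 2) + (ω : ℂ) / 2 * ((1 + z) / (1 - z))‖ = √(1 - ‖z‖ ^ 2) := by
  have hz1 : z ≠ 1 := by rintro rfl; simp at hz
  have hA : 0 < ‖1 - z‖ := norm_pos_iff.mpr (sub_ne_zero.mpr hz1.symm)
  have hs : 0 ≤ 1 - ‖z‖ ^ 2 := by nlinarith [norm_nonneg z]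
  have hω2 : (ω : ℂ) / 2 = ((ω / 2 : ℝ) : ℂ) := by push_cast; rfl
  rw [hω2, Complex.conj_ofReal, ← mul_one_add, one_add_div_one_sub hz1, Complex.ofReal_re,
    Complex.re_ofReal_mul, re_one_add_div_one_sub, norm_mul, norm_div, Complex.norm_real,
    Real.norm_of_nonneg (by positivity), Complex.norm_two]
  have hre : ω / 2 * (ω / 2 * ((1 - ‖z‖ ^ 2) / ‖1 - z‖ ^ 2)) =
      (ω / 2 * √(1 - ‖z‖ ^ 2) / ‖1 - z‖) ^ 2 := by
    rw [div_pow, mul_pow, Real.sq_sqrt hs]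
    ring
  rw [hre, Real.sqrt_sq (by positivity)]
  field_simp

theorem squeezed_state_fidelity_general (ω : ℝ) (hω : 0 < ω) (z : ℂ) (hz : ‖z‖ < 1)
    (c₀ cz : ℝ)
    (ψ₀ ψz : ℝ → ℂ)
    (hψ₀ : ∀ x : ℝ, ψ₀ x = (c₀ : ℂ) * Complex.exp (-((ω : ℂ) / 2) * (x : ℂ) ^ 2))
    (hψz : ∀ x : ℝ, ψz x =
      (cz : ℂ) * Complex.exp (-((ω : ℂ) / 2) * ((1 + z) / (1 - z)) * (x : ℂ) ^ 2))
    (hn₀ : ∫ x : ℝ, ‖ψ₀ x‖ ^ 2 = 1)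
    (hnz : ∫ x : ℝ, ‖ψz x‖ ^ 2 = 1) :
    ‖∫ x : ℝ, (starRingEnd ℂ) (ψ₀ x) * ψz x‖ ^ 2 =
      Real.sqrt (1 - ‖z‖ ^ 2) ∧
    (‖z‖ = 1 / Real.sqrt 2 →
      ‖∫ x : ℝ, (starRingEnd ℂ) (ψ₀ x) * ψz x‖ ^ 2 = 1 / Real.sqrt 2) := by
  have hψz' : ∀ x : ℝ, ψz x = cz * cexp (-((ω : ℂ) / 2 * ((1 + z) / (1 - z))) * x ^ 2) := by
    intro x
    rw [hψz, neg_mul]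
  simp only [hψ₀, hψz'] at hn₀ hnz ⊢
  have ha : 0 < ((ω : ℂ) / 2).re := by simpa using hω
  have hb : 0 < ((ω : ℂ) / 2 * ((1 + z) / (1 - z))).re := by
    simpa using mul_pos ha (re_one_add_div_one_sub_pos hz)
  have hfid := sq_norm_integral_conj_gaussian_mul_gaussian ha hb hn₀ hnz
  rw [gaussian_fidelity_ground_squeezed hω hz] at hfid
  refine ⟨hfid, fun h => ?_⟩
  rw [hfid, h, div_pow, Real.sq_sqrt zero_le_two, one_div, ← Real.sqrt_inv]
  norm_num

/-- The fidelity between the normalized ground state Gaussian and the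
normalized squeezed Gaussian of parameter `z`, `|z| < 1`, is `√(1 − |z|²)`;
in particular for `|z| = 1/√2` it equals `1/√2`. -/
theorem squeezed_state_fidelity (ω : ℝ) (hω : 0 < ω) (z : ℂ) (hz : ‖z‖ < 1)
    (c₀ cz : ℝ) (hc₀ : 0 < c₀) (hcz : 0 < cz)
    (ψ₀ ψz : ℝ → ℂ)
    (hψ₀ : ∀ x : ℝ, ψ₀ x = (c₀ : ℂ) * Complex.exp (-((ω : ℂ) / 2) * (x : ℂ) ^ 2))
    (hψz : ∀ x : ℝ, ψz x =
      (cz : ℂ) * Complex.exp (-((ω : ℂ) / 2) * ((1 + z) / (1 - z)) * (x : ℂ) ^ 2))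
    (hn₀ : ∫ x : ℝ, ‖ψ₀ x‖ ^ 2 = 1)
    (hnz : ∫ x : ℝ, ‖ψz x‖ ^ 2 = 1) :
    ‖∫ x : ℝ, (starRingEnd ℂ) (ψ₀ x) * ψz x‖ ^ 2 =
      Real.sqrt (1 - ‖z‖ ^ 2) ∧
    (‖z‖ = 1 / Real.sqrt 2 →
      ‖∫ x : ℝ, (starRingEnd ℂ) (ψ₀ x) * ψz x‖ ^ 2 = 1 / Real.sqrt 2) :=
  squeezed_state_fidelity_general ω hω z hz c₀ cz ψ₀ ψz hψ₀ hψz hn₀ hnz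
end

section
/- Let N ≥ 1, let Z be an N×N complex matrix with 1 − ZZ* positive definite, and let A, B be N×N complex matrices. For real s, u in a sufficiently small neighborhood of 0, define F(s,u) = −log det(1 − (Z+sA)(Z+uB)*), using the principal branch of the complex logarithm (well defined near (0,0) since det(1 − ZZ*) > 0). Then the mixed second derivative exists and ∂²F/∂s∂u(0,0) = tr((1 − ZZ*)⁻¹·A·(1 − Z*Z)⁻¹·B*). -/
open Matrix
open scoped ComplexOrder

/-!
Write `1 - (Z + sA)(Z + uB)ᴴ = M s - u • W s` with `M s = 1 - (Z + sA)Zᴴ` and `W s = (Z + sA)Bᴴ`.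
Jacobi's formula `d(log det) = tr(M⁻¹ dM)` gives `∂ᵤF(s, 0) = tr((M s)⁻¹ W s)` for `s` near `0`.
Differentiating in `s` with `d(M⁻¹) = -M⁻¹ dM M⁻¹` gives, with `C = 1 - ZZᴴ`,
`tr(C⁻¹ A Bᴴ + C⁻¹ A Zᴴ C⁻¹ Z Bᴴ) = tr(C⁻¹ A (1 + Zᴴ C⁻¹ Z) Bᴴ)`, and the push-through identity
`(1 - ZᴴZ)⁻¹ = 1 + Zᴴ (1 - ZZᴴ)⁻¹ Z` turns this into the claimed trace.
-/

open Complex Topology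

theorem HasDerivAt.ringInverse {𝕜 R : Type*} [NontriviallyNormedField 𝕜] [NormedRing R]
    [HasSummableGeomSeries R] [NormedAlgebra 𝕜 R] {f : 𝕜 → R} {f' : R} {x : 𝕜}
    (hf : HasDerivAt f f' x) (hx : IsUnit (f x)) :
    HasDerivAt (fun t => Ring.inverse (f t))
      (-(Ring.inverse (f x) * f' * Ring.inverse (f x))) x := by
  obtain ⟨u, hu⟩ := hx
  have hinv : HasFDerivAt Ring.inverse
      (-ContinuousLinearMap.mulLeftRight 𝕜 R (Ring.inverse (f x)) (Ring.inverse (f x))) (f x) := by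
    rw [← hu, Ring.inverse_unit]
    exact hasFDerivAt_ringInverse u
  simpa [Function.comp_def] using hinv.comp_hasDerivAt x hf

theorem Complex.mem_slitPlane_of_pos {z : ℂ} (hz : 0 < z) : z ∈ slitPlane :=
  Or.inl (Complex.pos_iff.1 hz).1

namespace Matrix

variable {n : Type*} [Fintype n] [DecidableEq n]

open Polynomial in
theorem hasDerivAt_det_one_add_smul {𝕜 : Type*} [NontriviallyNormedField 𝕜] (M : Matrix n n 𝕜) :
    HasDerivAt (fun t : 𝕜 => det (1 + t • M)) (trace M) 0 := by
  have hpoly : (fun t : 𝕜 => det (1 + t • M)) =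
      fun t => (det (1 + (X : 𝕜[X]) • M.map C)).eval t := by
    funext t
    simp [eval_det, ← smul_eq_mul_diagonal]
  rw [hpoly, ← derivative_det_one_add_X_smul M]
  exact Polynomial.hasDerivAt _ 0

theorem hasDerivAt_det_add_smul {𝕜 : Type*} [NontriviallyNormedField 𝕜] (M W : Matrix n n 𝕜)
    (hM : IsUnit M.det) :
    HasDerivAt (fun t : 𝕜 => det (M + t • W)) (det M * trace (M⁻¹ * W)) 0 := by
  have hfac : ∀ t : 𝕜, M + t • W = M * (1 + t • (M⁻¹ * W)) := fun t => by
    rw [Matrix.mul_add, Matrix.mul_one, Matrix.mul_smul, ← Matrix.mul_assoc,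
      mul_nonsing_inv _ hM, Matrix.one_mul]
  simp only [hfac, det_mul]
  exact (hasDerivAt_det_one_add_smul _).const_mul _

theorem hasDerivAt_neg_log_det_sub_smul (M W : Matrix n n ℂ) (hM : M.det ∈ slitPlane) :
    HasDerivAt (fun u : ℝ => -log (det (M - (u : ℂ) • W))) (trace (M⁻¹ * W)) 0 := by
  have hM' : M.det ≠ 0 := slitPlane_ne_zero hM
  have hdet := (hasDerivAt_det_add_smul M (-W) hM'.isUnit).comp_ofReal (z := 0)
  simp only [smul_neg, ← sub_eq_add_neg] at hdet
  refine (hdet.clog_real (by simpa using hM)).neg.congr_deriv ?_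
  simp [neg_div, mul_div_cancel_left₀ _ hM']

theorem inv_one_sub_mul_comm {m R : Type*} [Fintype m] [DecidableEq m] [CommRing R]
    (X : Matrix m n R) (Y : Matrix n m R) (h : IsUnit (1 - X * Y).det) :
    (1 - Y * X)⁻¹ = 1 + Y * (1 - X * Y)⁻¹ * X := by
  apply inv_eq_right_inv
  calc (1 - Y * X) * (1 + Y * (1 - X * Y)⁻¹ * X)
      = 1 - Y * X + Y * ((1 - X * Y) * (1 - X * Y)⁻¹) * X := by
        simp only [Matrix.mul_add, Matrix.mul_sub, Matrix.sub_mul, Matrix.mul_one,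
          Matrix.one_mul, Matrix.mul_assoc]
    _ = 1 := by rw [mul_nonsing_inv _ h, Matrix.mul_one, sub_add_cancel]

section Normed

-- Any matrix norm would do: the statements below only involve the product topology.
attribute [local instance] Matrix.linftyOpNormedAddCommGroup Matrix.linftyOpNormedRing
  Matrix.linftyOpNormedAlgebra

theorem _root_.HasDerivAt.matrix_trace {𝕜 𝕂 : Type*} [NontriviallyNormedField 𝕜]
    [NontriviallyNormedField 𝕂] [NormedAlgebra 𝕜 𝕂] {f : 𝕜 → Matrix n n 𝕂}
    {f' : Matrix n n 𝕂} {x : 𝕜} (hf : HasDerivAt f f' x) :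
    HasDerivAt (fun t => trace (f t)) (trace f') x :=
  (⟨(traceLinearMap n 𝕂 𝕂).restrictScalars 𝕜, continuous_id.matrix_trace⟩ :
    Matrix n n 𝕂 →L[𝕜] 𝕂).hasFDerivAt.comp_hasDerivAt x hf

theorem _root_.HasDerivAt.matrix_inv_mul {𝕜 𝕂 : Type*} [NontriviallyNormedField 𝕜]
    [RCLike 𝕂] [NormedAlgebra 𝕜 𝕂]
    {f g : 𝕜 → Matrix n n 𝕂} {f' g' : Matrix n n 𝕂} {x : 𝕜}
    (hf : HasDerivAt f f' x) (hg : HasDerivAt g g' x) (hfx : IsUnit (f x).det) :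
    HasDerivAt (fun t => (f t)⁻¹ * g t) ((f x)⁻¹ * g' - (f x)⁻¹ * f' * (f x)⁻¹ * g x) x := by
  simp only [nonsing_inv_eq_ringInverse]
  have := (hf.ringInverse ((isUnit_iff_isUnit_det _).2 hfx)).mul hg
  rwa [neg_mul, neg_add_eq_sub] at this

theorem hasDerivAt_trace_inv_add_smul_mul {𝕂 : Type*} [RCLike 𝕂] (M P W Q : Matrix n n 𝕂)
    (hM : IsUnit M.det) :
    HasDerivAt (fun t : 𝕂 => trace ((M + t • P)⁻¹ * (W + t • Q)))
      (trace (M⁻¹ * Q - M⁻¹ * P * M⁻¹ * W)) 0 := by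
  have hline : ∀ X Y : Matrix n n 𝕂, HasDerivAt (fun t : 𝕂 => X + t • Y) Y 0 := fun X Y =>
    (((hasDerivAt_id (0 : 𝕂)).smul_const Y).const_add X).congr_deriv (one_smul _ _)
  simpa using ((hline M P).matrix_inv_mul (hline W Q) (by simpa using hM)).matrix_trace

end Normed

end Matrix

theorem kahler_potential_mixed_derivative_general (N : ℕ)
    (Z A B : Matrix (Fin N) (Fin N) ℂ)
    (hpos : (1 - Z * Zᴴ).PosDef)
    (F : ℝ → ℝ → ℂ)
    (hF : ∀ s u : ℝ,
      F s u = -Complex.log (Matrix.det (1 - (Z + (s : ℂ) • A) * (Z + (u : ℂ) • B)ᴴ))) :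
    (∀ᶠ s in nhds (0 : ℝ), DifferentiableAt ℝ (fun u : ℝ => F s u) 0) ∧
    HasDerivAt (fun s : ℝ => deriv (fun u : ℝ => F s u) 0)
      (Matrix.trace ((1 - Z * Zᴴ)⁻¹ * A * (1 - Zᴴ * Z)⁻¹ * Bᴴ)) 0 := by
  set C := 1 - Z * Zᴴ
  have hC : C.det ∈ slitPlane := mem_slitPlane_of_pos hpos.det_pos
  have hCu : IsUnit C.det := (slitPlane_ne_zero hC).isUnit
  let M : ℝ → Matrix (Fin N) (Fin N) ℂ := fun s => C + (s : ℂ) • -(A * Zᴴ)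
  let W : ℝ → Matrix (Fin N) (Fin N) ℂ := fun s => Z * Bᴴ + (s : ℂ) • (A * Bᴴ)
  have hslice : ∀ s u : ℝ, F s u = -log (det (M s - (u : ℂ) • W s)) := by
    intro s u
    simp only [hF, M, W, C, conjTranspose_add, conjTranspose_smul, Complex.star_def, conj_ofReal,
      Matrix.add_mul, Matrix.mul_add, Matrix.smul_mul, Matrix.mul_smul, smul_add]
    congr 3
    module
  have hnear : ∀ᶠ s in 𝓝 0, (M s).det ∈ slitPlane :=
    (hasDerivAt_det_add_smul C _ hCu).comp_ofReal.continuousAt.eventually_mem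
      (isOpen_slitPlane.mem_nhds (by simpa using hC))
  have hu : ∀ s, (M s).det ∈ slitPlane → HasDerivAt (F s) (trace ((M s)⁻¹ * W s)) 0 :=
    fun s hs => by
      rw [show F s = _ from funext (hslice s)]
      exact hasDerivAt_neg_log_det_sub_smul _ _ hs
  refine ⟨hnear.mono fun s hs => (hu s hs).differentiableAt, ?_⟩
  have hφ := (hasDerivAt_trace_inv_add_smul_mul C (-(A * Zᴴ)) (Z * Bᴴ) (A * Bᴴ) hCu).comp_ofReal
  refine (hφ.congr_of_eventuallyEq (hnear.mono fun s hs => (hu s hs).deriv)).congr_deriv ?_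
  rw [inv_one_sub_mul_comm Z Zᴴ hCu]
  congr 1
  noncomm_ring

/-- Mixed second derivative of the Kähler potential
`F(s,u) = −log det(1 − (Z+sA)(Z+uB)*)` at the origin equals
`tr((1−ZZ*)⁻¹ A (1−Z*Z)⁻¹ B*)`. -/
theorem kahler_potential_mixed_derivative (N : ℕ) (hN : 1 ≤ N)
    (Z A B : Matrix (Fin N) (Fin N) ℂ)
    (hpos : (1 - Z * Zᴴ).PosDef)
    (F : ℝ → ℝ → ℂ)
    (hF : ∀ s u : ℝ,
      F s u = -Complex.log (Matrix.det (1 - (Z + (s : ℂ) • A) * (Z + (u : ℂ) • B)ᴴ))) :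
    (∀ᶠ s in nhds (0 : ℝ), DifferentiableAt ℝ (fun u : ℝ => F s u) 0) ∧
    HasDerivAt (fun s : ℝ => deriv (fun u : ℝ => F s u) 0)
      (Matrix.trace ((1 - Z * Zᴴ)⁻¹ * A * (1 - Zᴴ * Z)⁻¹ * Bᴴ)) 0 :=
  kahler_potential_mixed_derivative_general N Z A B hpos F hF
end

section
/- Let x₊, x₋ : ℝ → ℝ be twice differentiable solutions of ẍ(t) + t²x(t) = 0 with x₊ even, x₋ odd, and Wronskian x₊ẋ₋ − ẋ₊x₋ = 1. For t > 0 and i ∈ {1,2} with frequencies ω₁ = t₁ > 0, ω₂ = t₂ > 0, define a_{i±}(t) = (ω_i·x_±(t) + i·ẋ_±(t))/√(2ω_i), and set U(t₁,t₂) = i·a_{2+}(t₂)·conj(a_{1−}(t₁)) − i·a_{2−}(t₂)·conj(a_{1+}(t₁)) and V̄(t₁,t₂) = −i·a_{2+}(t₂)·a_{1−}(t₁) + i·a_{2−}(t₂)·a_{1+}(t₁). Then, in the double limit t₁, t₂ → +∞ (i.e. as min(t₁,t₂) → ∞): U(t₁,t₂)·e^{−i(t₁² − t₂²)/2} → 1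 and V̄(t₁,t₂) → 0. -/
/-!
Remove the adiabatic phase: `b(t) = a(t) e^{it²/2}` satisfies `ḃ = conj b · e^{it²} / (2t)`.
This coupling is only `O(1/t)`, which lets `|b|` grow at most like `√t`; but it oscillates,
and one integration by parts turns it into an integrable `O(t^{-5/2})` term, so `b₊` and `b₋`
converge. Up to unimodular factors, `U·e^{-i(t₁²-t₂²)/2}` and `V̄` are bilinear in
`b_±(t₂)` and `b_±(t₁)` (or their conjugates), hence converge to the same expressions in the
limits. The first one is the Wronskian at equal times, so its limit is `1`; the second is
antisymmetric, so its limit is `0`.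
-/

open Real Filter

/-- Instantaneous complex coordinate `a(t) = (ω·x(t) + i·ẋ(t))/√(2ω)` at frequency `ω = t`. -/
noncomputable def aInst (f g : ℝ → ℝ) (t : ℝ) : ℂ :=
  ((t * f t : ℝ) + Complex.I * (g t : ℝ)) / ((Real.sqrt (2 * t) : ℝ) : ℂ)

open Complex Set ComplexConjugate MeasureTheory

theorem antitoneOn_norm_sq_div_of_norm_deriv_le {E : Type*} [NormedAddCommGroup E]
    [InnerProductSpace ℝ E] {b b' : ℝ → E} (hb : ∀ t > 0, HasDerivAt b (b' t) t)
    (hb' : ∀ t > 0, ‖b' t‖ ≤ ‖b t‖ / (2 * t)) :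
    AntitoneOn (fun t => ‖b t‖ ^ 2 / t) (Ioi 0) := by
  have hderiv : ∀ t > 0, HasDerivAt (fun t => ‖b t‖ ^ 2 / t)
      ((2 * inner ℝ (b t) (b' t) * t - ‖b t‖ ^ 2 * 1) / t ^ 2) t :=
    fun t ht => (hb t ht).norm_sq.div (hasDerivAt_id t) ht.ne'
  refine antitoneOn_of_hasDerivWithinAt_nonpos (convex_Ioi 0)
    (fun t ht => (hderiv t ht).continuousAt.continuousWithinAt)
    (fun t ht => (hderiv t (interior_subset ht)).hasDerivWithinAt) fun t ht => ?_
  rw [interior_Ioi] at ht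
  have ht : 0 < t := ht
  have h2t : ‖b' t‖ * (2 * t) ≤ ‖b t‖ := (le_div_iff₀ (by positivity)).1 (hb' t ht)
  have hinner := real_inner_le_norm (b t) (b' t)
  refine div_nonpos_of_nonpos_of_nonneg ?_ (sq_nonneg t)
  nlinarith [norm_nonneg (b t)]

theorem norm_le_norm_one_mul_sqrt_of_norm_deriv_le {E : Type*} [NormedAddCommGroup E]
    [InnerProductSpace ℝ E] {b b' : ℝ → E} (hb : ∀ t > 0, HasDerivAt b (b' t) t)
    (hb' : ∀ t > 0, ‖b' t‖ ≤ ‖b t‖ / (2 * t)) {t : ℝ} (ht : 1 ≤ t) :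
    ‖b t‖ ≤ ‖b 1‖ * √t := by
  have h : ‖b t‖ ^ 2 / t ≤ ‖b 1‖ ^ 2 / 1 := antitoneOn_norm_sq_div_of_norm_deriv_le hb hb'
    (mem_Ioi.2 one_pos) (mem_Ioi.2 (one_pos.trans_le ht)) ht
  rw [div_one, div_le_iff₀ (one_pos.trans_le ht)] at h
  rw [← sqrt_sq (norm_nonneg _), ← sqrt_sq (norm_nonneg (b 1)), ← sqrt_mul (sq_nonneg _)]
  exact sqrt_le_sqrt h

/-- The adiabatic phase `e^{i∫ω}` for `ω = t`. -/
noncomputable def chirp (t : ℝ) : ℂ := cexp (I * t ^ 2 / 2)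

theorem norm_chirp (t : ℝ) : ‖chirp t‖ = 1 := by
  simp [chirp, norm_exp, ← ofReal_pow]

theorem conj_chirp_mul_self (t : ℝ) : conj (chirp t) * chirp t = 1 := by
  rw [mul_comm, mul_conj', norm_chirp]; simp

theorem conj_chirp_mul_chirp (t₁ t₂ : ℝ) :
    conj (chirp t₁) * chirp t₂ = cexp (-I * ((t₁ : ℂ) ^ 2 - (t₂ : ℂ) ^ 2) / 2) := by
  rw [chirp, chirp, ← Complex.exp_conj, ← Complex.exp_add]
  congr 1
  simp only [map_div₀, map_mul, conj_I, map_pow, conj_ofReal, map_ofNat]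
  ring

theorem hasDerivAt_chirp (t : ℝ) : HasDerivAt chirp (I * t * chirp t) t := by
  have hs : HasDerivAt (fun s : ℝ => (s : ℂ)) 1 t := by
    simpa using (hasDerivAt_id t).ofReal_comp
  have h := (((hs.pow 2).const_mul I).div_const 2).cexp
  simp only [Pi.pow_apply] at h
  refine h.congr_deriv ?_
  rw [chirp]; push_cast; ring

theorem norm_conj_mul_chirp_sq (z : ℂ) (t : ℝ) : ‖conj z * chirp t ^ 2‖ = ‖z‖ := by
  rw [norm_mul, RCLike.norm_conj, norm_pow, norm_chirp, one_pow, mul_one]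

def IsChirpedSolution (b : ℝ → ℂ) : Prop :=
  ∀ t > 0, HasDerivAt b (conj (b t) * chirp t ^ 2 / (2 * t)) t

noncomputable def chirpCorrection (b : ℝ → ℂ) (t : ℝ) : ℂ :=
  conj (b t) * chirp t ^ 2 / (4 * I * t ^ 2)

/-- Integration by parts: the correction removes the non-integrable `O(1/t)` part of `ḃ`. -/
theorem hasDerivAt_sub_chirpCorrection {b : ℝ → ℂ} {t : ℝ} (ht : 0 < t)
    (hb : HasDerivAt b (conj (b t) * chirp t ^ 2 / (2 * t)) t) :
    HasDerivAt (fun s => b s - chirpCorrection b s)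
      ((-b t + 4 * conj (b t) * chirp t ^ 2) / (8 * I * t ^ 3)) t := by
  have hs : HasDerivAt (fun s : ℝ => (s : ℂ)) 1 t := by
    simpa using (hasDerivAt_id t).ofReal_comp
  have hden : HasDerivAt (fun s : ℝ => 4 * I * (s : ℂ) ^ 2) (4 * I * (2 * t)) t := by
    simpa using (hs.pow 2).const_mul (4 * I)
  have htC : (t : ℂ) ≠ 0 := ofReal_ne_zero.2 ht.ne'
  refine (hb.sub ((hb.star.mul ((hasDerivAt_chirp t).pow 2)).div hden (by simp [htC])))
    |>.congr_deriv ?_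
  simp only [Pi.mul_apply, Pi.pow_apply, starRingEnd_apply, star_div₀, star_mul', star_star,
    star_pow]
  simp only [← starRingEnd_apply, conj_ofReal, map_ofNat]
  field_simp
  linear_combination (-8 * b t * (conj (chirp t) * chirp t + 1)) * conj_chirp_mul_self t

namespace IsChirpedSolution

variable {b : ℝ → ℂ} (hb : IsChirpedSolution b)
include hb

theorem norm_le_mul_self {t : ℝ} (ht : 1 ≤ t) : ‖b t‖ ≤ ‖b 1‖ * t := by
  have hsqrt : √t ≤ t := (sqrt_le_left (by linarith)).2 (by nlinarith)
  have hderiv (s : ℝ) (hs : s > 0) :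
      ‖conj (b s) * chirp s ^ 2 / (2 * s)‖ ≤ ‖b s‖ / (2 * s) := by
    rw [norm_div, norm_conj_mul_chirp_sq, norm_mul, Complex.norm_two, norm_real,
      Real.norm_of_nonneg hs.le]
  calc ‖b t‖ ≤ ‖b 1‖ * √t := norm_le_norm_one_mul_sqrt_of_norm_deriv_le hb hderiv ht
    _ ≤ ‖b 1‖ * t := by gcongr

theorem integrableOn_deriv_sub_chirpCorrection :
    IntegrableOn (fun t : ℝ => (-b t + 4 * conj (b t) * chirp t ^ 2) / (8 * I * t ^ 3))
      (Ioi 1) := by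
  refine Integrable.mono'
    ((integrableOn_Ioi_rpow_of_lt (a := -2) (by norm_num) one_pos).const_mul ‖b 1‖) ?_
    ((ae_restrict_iff' measurableSet_Ioi).2 (Eventually.of_forall fun t ht => ?_))
  · refine ContinuousOn.aestronglyMeasurable (fun t ht => ?_) measurableSet_Ioi
    have ht0 : (0 : ℝ) < t := one_pos.trans ht
    have hbt := (hb t ht0).continuousAt
    have hbt' : ContinuousAt (fun s => conj (b s)) t := continuous_conj.continuousAt.comp hbt
    have hchirp := (hasDerivAt_chirp t).continuousAt
    have htC : (t : ℂ) ≠ 0 := ofReal_ne_zero.2 ht0.ne'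
    exact ContinuousAt.continuousWithinAt (by fun_prop (disch := simp [htC]))
  · have ht0 : (0 : ℝ) < t := one_pos.trans ht
    have hnum : ‖-b t + 4 * (conj (b t) * chirp t ^ 2)‖ ≤ 5 * ‖b t‖ :=
      calc _ ≤ ‖-b t‖ + ‖4 * (conj (b t) * chirp t ^ 2)‖ := norm_add_le _ _
        _ = 5 * ‖b t‖ := by rw [norm_neg, norm_mul, norm_conj_mul_chirp_sq]; norm_num; ring
    have hden : ‖8 * I * (t : ℂ) ^ 3‖ = 8 * t ^ 3 := by simp [abs_of_pos ht0]
    rw [mul_assoc 4, norm_div, hden, div_le_iff₀ (by positivity), rpow_neg ht0.le, rpow_two]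
    calc _ ≤ 5 * (‖b 1‖ * t) := hnum.trans (by gcongr; exact hb.norm_le_mul_self ht.le)
      _ ≤ ‖b 1‖ * (t ^ 2)⁻¹ * (8 * t ^ 3) := by
        field_simp
        nlinarith [norm_nonneg (b 1)]

theorem tendsto_chirpCorrection : Tendsto (chirpCorrection b) atTop (nhds 0) := by
  have hdecay : Tendsto (fun t : ℝ => ‖b 1‖ * t⁻¹) atTop (nhds 0) := by
    simpa using tendsto_inv_atTop_zero.const_mul ‖b 1‖
  refine squeeze_zero_norm' ?_ hdecay
  filter_upwards [eventually_ge_atTop 1] with t ht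
  have ht0 : 0 < t := by linarith
  have hden : ‖4 * I * (t : ℂ) ^ 2‖ = 4 * t ^ 2 := by simp [abs_of_pos ht0]
  rw [chirpCorrection, norm_div, hden, norm_conj_mul_chirp_sq, div_le_iff₀ (by positivity)]
  calc ‖b t‖ ≤ ‖b 1‖ * t := hb.norm_le_mul_self ht
    _ ≤ ‖b 1‖ * t⁻¹ * (4 * t ^ 2) := by
      field_simp
      nlinarith [norm_nonneg (b 1)]

theorem exists_tendsto : ∃ L, Tendsto b atTop (nhds L) := by
  have hc := tendsto_limUnder_of_hasDerivAt_of_integrableOn_Ioi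
    (fun t ht => hasDerivAt_sub_chirpCorrection (one_pos.trans ht) (hb t (one_pos.trans ht)))
    hb.integrableOn_deriv_sub_chirpCorrection
  exact ⟨_, by simpa using hc.add hb.tendsto_chirpCorrection⟩

end IsChirpedSolution

theorem sq_ofReal_sqrt_two_mul {t : ℝ} (ht : 0 ≤ t) : ((√(2 * t) : ℝ) : ℂ) ^ 2 = 2 * t := by
  rw [← ofReal_pow, sq_sqrt (by positivity)]; push_cast; ring

theorem hasDerivAt_aInst {x v : ℝ → ℝ} {t : ℝ} (ht : 0 < t) (hx : HasDerivAt x (v t) t)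
    (hv : HasDerivAt v (-(t ^ 2 * x t)) t) :
    HasDerivAt (aInst x v) (-I * t * aInst x v t + conj (aInst x v t) / (2 * t)) t := by
  have hnum : HasDerivAt (fun s => ((s * x s : ℝ) : ℂ) + I * (v s : ℂ))
      (((1 * x t + t * v t : ℝ) : ℂ) + I * ((-(t ^ 2 * x t) : ℝ) : ℂ)) t :=
    ((hasDerivAt_id t).mul hx).ofReal_comp.add (hv.ofReal_comp.const_mul I)
  have hden :
      HasDerivAt (fun s => ((√(2 * s) : ℝ) : ℂ)) (((2 * 1) / (2 * √(2 * t)) : ℝ) : ℂ) t :=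
    ((hasDerivAt_id t).const_mul 2).sqrt (by simp [ht.ne']) |>.ofReal_comp
  have hs : ((√(2 * t) : ℝ) : ℂ) ≠ 0 := ofReal_ne_zero.2 (by positivity)
  have htC : (t : ℂ) ≠ 0 := ofReal_ne_zero.2 ht.ne'
  refine (hnum.div hden hs).congr_deriv ?_
  have hsq := sq_ofReal_sqrt_two_mul ht.le
  simp only [aInst, map_div₀, map_add, map_mul, conj_ofReal, conj_I]
  push_cast
  field_simp
  rw [hsq]
  linear_combination (4 * (t : ℂ) ^ 3 * v t) * I_sq

noncomputable def aRot (x v : ℝ → ℝ) (t : ℝ) : ℂ := aInst x v t * chirp t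

theorem aInst_eq_aRot_mul_conj_chirp (x v : ℝ → ℝ) (t : ℝ) :
    aInst x v t = aRot x v t * conj (chirp t) := by
  rw [aRot, mul_assoc, mul_comm (chirp t), conj_chirp_mul_self, mul_one]

theorem hasDerivAt_aRot {x v : ℝ → ℝ} {t : ℝ} (ht : 0 < t) (hx : HasDerivAt x (v t) t)
    (hv : HasDerivAt v (-(t ^ 2 * x t)) t) :
    HasDerivAt (aRot x v) (conj (aRot x v t) * chirp t ^ 2 / (2 * t)) t := by
  refine ((hasDerivAt_aInst ht hx hv).mul (hasDerivAt_chirp t)).congr_deriv ?_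
  have htC : (t : ℂ) ≠ 0 := ofReal_ne_zero.2 ht.ne'
  rw [aRot, map_mul]
  field_simp
  linear_combination (-conj (aInst x v t) * chirp t) * conj_chirp_mul_self t

theorem isChirpedSolution_aRot {x v : ℝ → ℝ} (hx : ∀ t, HasDerivAt x (v t) t)
    (hv : ∀ t, HasDerivAt v (-(t ^ 2 * x t)) t) : IsChirpedSolution (aRot x v) :=
  fun t ht => hasDerivAt_aRot ht (hx t) (hv t)

theorem wronskian_aInst {xp vp xm vm : ℝ → ℝ} {t : ℝ} (ht : 0 < t)
    (hW : xp t * vm t - vp t * xm t = 1) :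
    I * aInst xp vp t * conj (aInst xm vm t) - I * aInst xm vm t * conj (aInst xp vp t) = 1 := by
  have hs : ((√(2 * t) : ℝ) : ℂ) ≠ 0 := ofReal_ne_zero.2 (by positivity)
  have hsq := sq_ofReal_sqrt_two_mul ht.le
  have hWC : (xp t : ℂ) * vm t - vp t * xm t = 1 := by exact_mod_cast hW
  simp only [aInst, map_div₀, map_add, map_mul, conj_ofReal, conj_I]
  set s : ℝ := √(2 * t)
  field_simp
  rw [hsq]
  push_cast
  linear_combination (2 * (t : ℂ)) * hWC
    + (-2 * (t : ℂ) * ((xp t : ℂ) * vm t - vp t * xm t)) * I_sq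

theorem wronskian_aRot {xp vp xm vm : ℝ → ℝ} {t : ℝ} (ht : 0 < t)
    (hW : xp t * vm t - vp t * xm t = 1) :
    I * aRot xp vp t * conj (aRot xm vm t) - I * aRot xm vm t * conj (aRot xp vp t) = 1 := by
  simp only [aRot, map_mul]
  linear_combination wronskian_aInst ht hW + (I * aInst xp vp t * conj (aInst xm vm t)
    - I * aInst xm vm t * conj (aInst xp vp t)) * conj_chirp_mul_self t

theorem aInst_bracket_mul_cexp_eq_aRot_bracket (xp vp xm vm : ℝ → ℝ) (t₁ t₂ : ℝ) :
    (I * aInst xp vp t₂ * conj (aInst xm vm t₁) - I * aInst xm vm t₂ * conj (aInst xp vp t₁))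
        * cexp (-I * ((t₁ : ℂ) ^ 2 - (t₂ : ℂ) ^ 2) / 2)
      = I * aRot xp vp t₂ * conj (aRot xm vm t₁) - I * aRot xm vm t₂ * conj (aRot xp vp t₁) := by
  simp only [aInst_eq_aRot_mul_conj_chirp, ← conj_chirp_mul_chirp, map_mul, conj_conj]
  linear_combination (I * aRot xp vp t₂ * conj (aRot xm vm t₁)
    - I * aRot xm vm t₂ * conj (aRot xp vp t₁))
    * (conj (chirp t₂) * chirp t₂ * conj_chirp_mul_self t₁ + conj_chirp_mul_self t₂)

theorem norm_aInst_antibracket_eq_aRot (xp vp xm vm : ℝ → ℝ) (t₁ t₂ : ℝ) :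
    ‖-I * aInst xp vp t₂ * aInst xm vm t₁ + I * aInst xm vm t₂ * aInst xp vp t₁‖
      = ‖-I * aRot xp vp t₂ * aRot xm vm t₁ + I * aRot xm vm t₂ * aRot xp vp t₁‖ := by
  simp only [aInst_eq_aRot_mul_conj_chirp]
  calc _ = ‖(-I * aRot xp vp t₂ * aRot xm vm t₁ + I * aRot xm vm t₂ * aRot xp vp t₁)
          * (conj (chirp t₂) * conj (chirp t₁))‖ := by congr 1; ring
    _ = _ := by simp [norm_chirp]

theorem weber_propagator_two_times_general
    (xp vp xm vm : ℝ → ℝ)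
    (hxp : ∀ t, HasDerivAt xp (vp t) t) (hvp : ∀ t, HasDerivAt vp (-(t ^ 2 * xp t)) t)
    (hxm : ∀ t, HasDerivAt xm (vm t) t) (hvm : ∀ t, HasDerivAt vm (-(t ^ 2 * xm t)) t)
    (hW : ∀ t, xp t * vm t - vp t * xm t = 1)
    (U Vb : ℝ → ℝ → ℂ)
    (hU : ∀ t₁ t₂, U t₁ t₂ =
      Complex.I * aInst xp vp t₂ * (starRingEnd ℂ) (aInst xm vm t₁)
        - Complex.I * aInst xm vm t₂ * (starRingEnd ℂ) (aInst xp vp t₁))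
    (hV : ∀ t₁ t₂, Vb t₁ t₂ =
      -Complex.I * aInst xp vp t₂ * aInst xm vm t₁
        + Complex.I * aInst xm vm t₂ * aInst xp vp t₁) :
    Tendsto (fun p : ℝ × ℝ =>
        U p.1 p.2 * Complex.exp (-Complex.I * ((p.1 : ℂ) ^ 2 - (p.2 : ℂ) ^ 2) / 2))
      (atTop ×ˢ atTop) (nhds 1) ∧
    Tendsto (fun p : ℝ × ℝ => Vb p.1 p.2) (atTop ×ˢ atTop) (nhds 0) := by
  obtain ⟨Lp, hLp⟩ := (isChirpedSolution_aRot hxp hvp).exists_tendsto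
  obtain ⟨Lm, hLm⟩ := (isChirpedSolution_aRot hxm hvm).exists_tendsto
  have hwronskian : I * Lp * conj Lm - I * Lm * conj Lp = 1 := by
    refine tendsto_nhds_unique (((hLp.const_mul I).mul hLm.star).sub
      ((hLm.const_mul I).mul hLp.star)) (tendsto_const_nhds.congr' ?_)
    filter_upwards [eventually_gt_atTop 0] with t ht using (wronskian_aRot ht (hW t)).symm
  constructor
  · have h := ((hLp.comp tendsto_snd).const_mul I |>.mul (hLm.star.comp tendsto_fst)).sub
      ((hLm.comp tendsto_snd).const_mul I |>.mul (hLp.star.comp tendsto_fst))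
    rw [← starRingEnd_apply, ← starRingEnd_apply, hwronskian] at h
    refine h.congr fun p => ?_
    rw [hU, aInst_bracket_mul_cexp_eq_aRot_bracket]
    rfl
  · have h := ((hLp.comp tendsto_snd).const_mul (-I) |>.mul (hLm.comp tendsto_fst)).add
      ((hLm.comp tendsto_snd).const_mul I |>.mul (hLp.comp tendsto_fst))
    rw [show -I * Lp * Lm + I * Lm * Lp = 0 by ring] at h
    rw [tendsto_zero_iff_norm_tendsto_zero] at h ⊢
    exact h.congr fun p => by rw [hV, norm_aInst_antibracket_eq_aRot]; rfl

/-- Asymptotic diagonal form of the Weber propagator from `t₁` to `t₂`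
(frequencies `ω₁ = t₁`, `ω₂ = t₂`): `U·e^{−i(t₁²−t₂²)/2} → 1`, `V̄ → 0` as
`t₁, t₂ → +∞` jointly. -/
theorem weber_propagator_two_times
    (xp vp xm vm : ℝ → ℝ)
    (hxp : ∀ t, HasDerivAt xp (vp t) t) (hvp : ∀ t, HasDerivAt vp (-(t ^ 2 * xp t)) t)
    (hxm : ∀ t, HasDerivAt xm (vm t) t) (hvm : ∀ t, HasDerivAt vm (-(t ^ 2 * xm t)) t)
    (heven : ∀ t, xp (-t) = xp t) (hodd : ∀ t, xm (-t) = -xm t)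
    (hW : ∀ t, xp t * vm t - vp t * xm t = 1)
    (U Vb : ℝ → ℝ → ℂ)
    (hU : ∀ t₁ t₂, U t₁ t₂ =
      Complex.I * aInst xp vp t₂ * (starRingEnd ℂ) (aInst xm vm t₁)
        - Complex.I * aInst xm vm t₂ * (starRingEnd ℂ) (aInst xp vp t₁))
    (hV : ∀ t₁ t₂, Vb t₁ t₂ =
      -Complex.I * aInst xp vp t₂ * aInst xm vm t₁
        + Complex.I * aInst xm vm t₂ * aInst xp vp t₁) :
    Tendsto (fun p : ℝ × ℝ =>
        U p.1 p.2 * Complex.exp (-Complex.I * ((p.1 : ℂ) ^ 2 - (p.2 : ℂ) ^ 2) / 2))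
      (atTop ×ˢ atTop) (nhds 1) ∧
    Tendsto (fun p : ℝ × ℝ => Vb p.1 p.2) (atTop ×ˢ atTop) (nhds 0) :=
  weber_propagator_two_times_general xp vp xm vm hxp hvp hxm hvm hW U Vb hU hV
end
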